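/- Let τ ∈ {1, −1} and let λ ∈ ℝ be an eigenvalue of the Hermitian matrix K_p(τ) of multiplicity 2m. Then the characteristic polynomial of the monodromy matrix M_p(λ) equals (X − τ)^{2m}; that is, every eigenvalue of M_p(λ) equals τ. -/

import Mathlib

/-!
An eigenvector `v` of `K_p(τ)` for the eigenvalue `λ`, read block by block as `y_1, …, y_p`, solves
the Jacobi recursion at `z = λ`, and the two corner blocks of `K_p(τ)` say precisely that it stays a
solution after the Floquet extension `y_0 = τ⁻¹ y_p`, `y_{p+1} = τ y_1`. Hence `M_p(λ)` maps the
initial data `(y_0, y_1)` to `τ (y_0, y_1)`, and `v = 0` as soon as `(y_0, y_1) = 0`. So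
`v ↦ (y_0, y_1)` embeds the `λ`-eigenspace of `K_p(τ)`, of dimension at least `2m` by the multiplicity
hypothesis, into the `τ`-eigenspace of `M_p(λ)` inside `ℂ^{2m}`: therefore `M_p(λ) = τ I`.
-/

open Matrix ComplexOrder Polynomial

/-- The `pm × pm` block matrix `K_p(τ)` (blocks indexed by `Fin p`, entries inside a block by
`Fin m`; block row/column `j : Fin p` corresponds to the `1`-based index `j+1`):
the `j`-th diagonal block is `b_j`, the `(j, j+1)` and `(j+1, j)` blocks are `a_j` for
`j = 1, …, p−1`, the `(1, p)` block is `τ⁻¹ a_p`, the `(p, 1)` block is `τ a_p`, and the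
remaining blocks vanish (for `p = 2` the overlapping contributions add up). -/
noncomputable def Kmat (p m : ℕ) (a b : ℕ → Matrix (Fin m) (Fin m) ℂ) (τ : ℂ) :
    Matrix (Fin p × Fin m) (Fin p × Fin m) ℂ :=
  Matrix.of fun x y =>
    (if (x.1 : ℕ) = (y.1 : ℕ) then b ((x.1 : ℕ) + 1) x.2 y.2 else 0)
    + (if (y.1 : ℕ) = (x.1 : ℕ) + 1 then a ((x.1 : ℕ) + 1) x.2 y.2 else 0)
    + (if (x.1 : ℕ) = (y.1 : ℕ) + 1 then a ((y.1 : ℕ) + 1) x.2 y.2 else 0)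
    + (if (x.1 : ℕ) = 0 ∧ (y.1 : ℕ) = p - 1 then τ⁻¹ * a p x.2 y.2 else 0)
    + (if (x.1 : ℕ) = p - 1 ∧ (y.1 : ℕ) = 0 then τ * a p x.2 y.2 else 0)

/-- The matrix-valued solution `(y_n)_{n ∈ ℕ}` of the Jacobi recursion
`a_n y_{n+1} + b_n y_n + a_{n−1} y_{n−1} = z y_n` (for `n ≥ 1`) with initial data
`y_0, y_1` (here `a, b : ℕ → _` are the `p`-periodic coefficient sequences, so that
`a 0 = a p`, etc.). -/
noncomputable def sol {m : ℕ} (a b : ℕ → Matrix (Fin m) (Fin m) ℂ) (z : ℂ)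
    (y0 y1 : Matrix (Fin m) (Fin m) ℂ) : ℕ → Matrix (Fin m) (Fin m) ℂ
  | 0 => y0
  | 1 => y1
  | n + 2 =>
      (a (n + 1))⁻¹ *
        (z • sol a b z y0 y1 (n + 1) - b (n + 1) * sol a b z y0 y1 (n + 1)
          - a n * sol a b z y0 y1 n)

/-- The fundamental solution `φ_n(z)` with `φ_0 = 0`, `φ_1 = I_m`. -/
noncomputable def phi {m : ℕ} (a b : ℕ → Matrix (Fin m) (Fin m) ℂ) (z : ℂ) :
    ℕ → Matrix (Fin m) (Fin m) ℂ :=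
  sol a b z 0 1

/-- The fundamental solution `ϑ_n(z)` with `ϑ_0 = I_m`, `ϑ_1 = 0`. -/
noncomputable def theta {m : ℕ} (a b : ℕ → Matrix (Fin m) (Fin m) ℂ) (z : ℂ) :
    ℕ → Matrix (Fin m) (Fin m) ℂ :=
  sol a b z 1 0

/-- The `2m × 2m` monodromy matrix `M_p(z) = [[ϑ_p(z), φ_p(z)], [ϑ_{p+1}(z), φ_{p+1}(z)]]`. -/
noncomputable def Mmat (p : ℕ) {m : ℕ} (a b : ℕ → Matrix (Fin m) (Fin m) ℂ) (z : ℂ) :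
    Matrix (Fin m ⊕ Fin m) (Fin m ⊕ Fin m) ℂ :=
  Matrix.fromBlocks (theta a b z p) (phi a b z p) (theta a b z (p + 1)) (phi a b z (p + 1))


open Module in
theorem Matrix.IsHermitian.count_eigenvalues_le_finrank_eigenspace {𝕜 n : Type*} [RCLike 𝕜]
    [Fintype n] [DecidableEq n] {A : Matrix n n 𝕜} (hA : A.IsHermitian) (μ : ℝ) :
    Multiset.count μ (Finset.univ.val.map hA.eigenvalues) ≤
      finrank 𝕜 (End.eigenspace (toLin' A) (μ : 𝕜)) := by
  let e := WithLp.linearEquiv 2 𝕜 (n → 𝕜)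
  let f : {i // μ = hA.eigenvalues i} → End.eigenspace (toLin' A) (μ : 𝕜) := fun i =>
    ⟨hA.eigenvectorBasis i, by
      rw [End.mem_eigenspace_iff, toLin'_apply, hA.mulVec_eigenvectorBasis, ← i.2,
        RCLike.real_smul_eq_coe_smul (K := 𝕜)]⟩
  have hf : LinearIndependent 𝕜 f := by
    refine LinearIndependent.of_comp (Submodule.subtype _) ?_
    have hb := hA.eigenvectorBasis.toBasis.linearIndependent
    rw [OrthonormalBasis.coe_toBasis] at hb
    exact (hb.map' e.toLinearMap e.ker).comp Subtype.val Subtype.val_injective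
  calc Multiset.count μ (Finset.univ.val.map hA.eigenvalues)
      = Fintype.card {i // μ = hA.eigenvalues i} := by
        rw [Fintype.card_subtype, Multiset.count_map]; rfl
    _ ≤ _ := hf.fintype_card_le_finrank

open Module in
theorem Submodule.map_eq_top_of_card_le_finrank {K V n : Type*} [Field K] [AddCommGroup V]
    [Module K V] [Fintype n] (E : Submodule K V) (S : V →ₗ[K] n → K)
    (hS : ∀ v ∈ E, S v = 0 → v = 0) (hE : Fintype.card n ≤ finrank K E) : E.map S = ⊤ := by
  have hinj : Function.Injective (S.domRestrict E) := by
    rw [← LinearMap.ker_eq_bot, LinearMap.ker_eq_bot']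
    exact fun v hv => Subtype.ext (hS v v.2 hv)
  rw [← LinearMap.range_domRestrict]
  refine Submodule.eq_top_of_finrank_eq (le_antisymm (Submodule.finrank_le _) ?_)
  rw [LinearMap.finrank_range_of_inj hinj, finrank_fintype_fun_eq_card]
  exact hE

theorem Matrix.eq_smul_one_of_mulVec_eq_smul {K n : Type*} [Field K] [Fintype n] [DecidableEq n]
    (M : Matrix n n K) (τ : K) (h : ∀ w, M *ᵥ w = τ • w) : M = τ • 1 :=
  mulVec_injective <| funext fun w => by rw [h, smul_mulVec, one_mulVec]

theorem Matrix.charpoly_smul_one {R n : Type*} [CommRing R] [Fintype n] [DecidableEq n] (τ : R) :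
    (τ • (1 : Matrix n n R)).charpoly = (X - C τ) ^ Fintype.card n := by
  rw [smul_one_eq_diagonal, charpoly_diagonal, Finset.prod_const, Finset.card_univ]

section JacobiRecursion

variable {m : ℕ} (a b : ℕ → Matrix (Fin m) (Fin m) ℂ) (z : ℂ)

theorem mul_sol_add_two {n : ℕ} (ha : IsUnit (a (n + 1))) (y₀ y₁ : Matrix (Fin m) (Fin m) ℂ) :
    a (n + 1) * sol a b z y₀ y₁ (n + 2) =
      z • sol a b z y₀ y₁ (n + 1) - b (n + 1) * sol a b z y₀ y₁ (n + 1)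
        - a n * sol a b z y₀ y₁ n := by
  rw [sol, ← mul_assoc, mul_nonsing_inv _ ((isUnit_iff_isUnit_det _).mp ha), one_mul]

theorem eq_theta_mulVec_add_phi_mulVec (ha : ∀ n, IsUnit (a n)) {N : ℕ} (Y : ℕ → Fin m → ℂ)
    (hY : ∀ n < N, a (n + 1) *ᵥ Y (n + 2) + b (n + 1) *ᵥ Y (n + 1) + a n *ᵥ Y n = z • Y (n + 1)) :
    ∀ n ≤ N + 1, Y n = theta a b z n *ᵥ Y 0 + phi a b z n *ᵥ Y 1
  | 0, _ => by simp [theta, phi, sol]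
  | 1, _ => by simp [theta, phi, sol]
  | n + 2, hn => by
    have h₀ := eq_theta_mulVec_add_phi_mulVec ha Y hY n (by omega)
    have h₁ := eq_theta_mulVec_add_phi_mulVec ha Y hY (n + 1) (by omega)
    refine mulVec_injective_iff_isUnit.mpr (ha (n + 1)) ?_
    simp only [theta, phi] at h₀ h₁ ⊢
    rw [mulVec_add, mulVec_mulVec, mulVec_mulVec, mul_sol_add_two a b z (ha _),
      mul_sol_add_two a b z (ha _), eq_sub_of_add_eq (eq_sub_of_add_eq (hY n (by omega))), h₀, h₁]
    simp only [sub_mulVec, mulVec_add, smul_mulVec, mulVec_mulVec, smul_add]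
    abel

theorem Mmat_mulVec_sumElim (ha : ∀ n, IsUnit (a n)) (p : ℕ) (Y : ℕ → Fin m → ℂ)
    (hY : ∀ n < p, a (n + 1) *ᵥ Y (n + 2) + b (n + 1) *ᵥ Y (n + 1) + a n *ᵥ Y n = z • Y (n + 1)) :
    Mmat p a b z *ᵥ Sum.elim (Y 0) (Y 1) = Sum.elim (Y p) (Y (p + 1)) := by
  have h := eq_theta_mulVec_add_phi_mulVec a b z ha Y hY
  rw [Mmat, fromBlocks_mulVec, Sum.elim_comp_inl, Sum.elim_comp_inr, ← h p (by omega),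
    ← h (p + 1) le_rfl]

end JacobiRecursion

section BlockVectors

variable {R : Type*} [Semiring R] {p m : ℕ}

def blockVec (v : Fin p × Fin m → R) (k : ℕ) : Fin m → R :=
  fun i => if h : k < p then v (⟨k, h⟩, i) else 0

theorem blockVec_add (u w : Fin p × Fin m → R) (k : ℕ) :
    blockVec (u + w) k = blockVec u k + blockVec w k := by
  ext i; simp only [blockVec, Pi.add_apply]; split_ifs <;> simp

theorem blockVec_smul (c : R) (w : Fin p × Fin m → R) (k : ℕ) :
    blockVec (c • w) k = c • blockVec w k := by
  ext i; simp only [blockVec, Pi.smul_apply]; split_ifs <;> simp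

theorem sum_ite_mul_eq_dotProduct_blockVec (P : ℕ → Prop) [DecidablePred P] (r : ℕ → Fin m → R)
    (v : Fin p × Fin m → R) {c : ℕ} (hc : c < p) (hP : ∀ k < p, P k ↔ k = c) :
    ∑ x : Fin p × Fin m, (if P x.1 then r x.1 x.2 else 0) * v x = r c ⬝ᵥ blockVec v c := by
  rw [Fintype.sum_prod_type, Finset.sum_eq_single ⟨c, hc⟩]
  · simp [(hP c hc).mpr rfl, dotProduct, blockVec, hc]
  · intro k _ hk
    simp [(hP k k.2).not.mpr (fun h => hk (Fin.ext h))]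
  · simp

theorem sum_ite_mul_eq_zero (P : ℕ → Prop) [DecidablePred P] (r : ℕ → Fin m → R)
    (v : Fin p × Fin m → R) (hP : ∀ k < p, ¬ P k) :
    ∑ x : Fin p × Fin m, (if P x.1 then r x.1 x.2 else 0) * v x = 0 :=
  Finset.sum_eq_zero fun x _ => by simp [hP x.1 x.1.2]

end BlockVectors

section FloquetExtension

variable {p m : ℕ}

/-- The blocks `v_0, …, v_{p-1}` of `v`, shifted to `y_1, …, y_p` and extended by the Floquet
condition `y_{n+p} = τ y_n` to `y_0 = τ⁻¹ y_p` and `y_{p+1} = τ y_1`. -/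
noncomputable def floquetExtension (τ : ℂ) (v : Fin p × Fin m → ℂ) (n : ℕ) : Fin m → ℂ :=
  if n = 0 then τ⁻¹ • blockVec v (p - 1) else if n ≤ p then blockVec v (n - 1) else τ • blockVec v 0

theorem floquetExtension_add (τ : ℂ) (u w : Fin p × Fin m → ℂ) :
    floquetExtension τ (u + w) = floquetExtension τ u + floquetExtension τ w := by
  funext n
  simp only [floquetExtension, Pi.add_apply]
  split_ifs <;> simp [blockVec_add, smul_add]

theorem floquetExtension_smul (τ c : ℂ) (w : Fin p × Fin m → ℂ) :
    floquetExtension τ (c • w) = c • floquetExtension τ w := by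
  funext n
  simp only [floquetExtension, Pi.smul_apply]
  split_ifs <;> simp [blockVec_smul, smul_comm c]

noncomputable def floquetData (τ : ℂ) : (Fin p × Fin m → ℂ) →ₗ[ℂ] (Fin m ⊕ Fin m → ℂ) where
  toFun v := Sum.elim (floquetExtension τ v 0) (floquetExtension τ v 1)
  map_add' u w := by ext (i | i) <;> simp [floquetExtension_add]
  map_smul' c w := by ext (i | i) <;> simp [floquetExtension_smul]

variable (τ : ℂ) (v : Fin p × Fin m → ℂ)

theorem floquetExtension_zero : floquetExtension τ v 0 = τ⁻¹ • blockVec v (p - 1) := by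
  simp [floquetExtension]

theorem floquetExtension_succ {k : ℕ} (hk : k < p) :
    floquetExtension τ v (k + 1) = blockVec v k := by
  simp [floquetExtension, Nat.succ_le_of_lt hk]

theorem floquetExtension_add_one : floquetExtension τ v (p + 1) = τ • blockVec v 0 := by
  simp [floquetExtension]

variable (a b : ℕ → Matrix (Fin m) (Fin m) ℂ) (i : Fin m)

theorem sum_Kmat_upper (j : Fin p) :
    ∑ x : Fin p × Fin m, (if (x.1 : ℕ) = j + 1 then a (j + 1) i x.2 else 0) * v x
      + ∑ x : Fin p × Fin m, (if (j : ℕ) = p - 1 ∧ (x.1 : ℕ) = 0 then τ * a p i x.2 else 0) * v x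
      = (a (j + 1) *ᵥ floquetExtension τ v (j + 2)) i := by
  rcases Nat.lt_or_ge (j + 1) p with hj | hj
  · rw [floquetExtension_succ τ v hj,
      sum_ite_mul_eq_dotProduct_blockVec (fun k => k = j + 1) (fun _ => a (j + 1) i) v hj
        fun _ _ => Iff.rfl,
      sum_ite_mul_eq_zero (fun k => (j : ℕ) = p - 1 ∧ k = 0) (fun _ l => τ * a p i l) v
        fun _ _ h => by omega, add_zero]
    rfl
  · have hjp : (j : ℕ) + 1 = p := by omega
    rw [show (j : ℕ) + 2 = p + 1 by omega, hjp, floquetExtension_add_one,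
      sum_ite_mul_eq_zero (fun k => k = p) (fun _ => a p i) v fun _ _ => by omega,
      sum_ite_mul_eq_dotProduct_blockVec (fun k => (j : ℕ) = p - 1 ∧ k = 0) (fun _ l => τ * a p i l)
        v (c := 0) (by omega) fun k _ => by omega,
      zero_add, mulVec_smul]
    simp [dotProduct, Finset.mul_sum, mul_assoc, mulVec]

theorem sum_Kmat_lower (ha₀ : a 0 = a p) (j : Fin p) :
    ∑ x : Fin p × Fin m, (if (j : ℕ) = x.1 + 1 then a (x.1 + 1) i x.2 else 0) * v x
      + ∑ x : Fin p × Fin m, (if (j : ℕ) = 0 ∧ (x.1 : ℕ) = p - 1 then τ⁻¹ * a p i x.2 else 0) * v x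
      = (a j *ᵥ floquetExtension τ v j) i := by
  obtain ⟨_ | k, hk⟩ := j
  · rw [ha₀, floquetExtension_zero,
      sum_ite_mul_eq_zero (fun k => 0 = k + 1) (fun k => a (k + 1) i) v fun _ _ => by omega,
      sum_ite_mul_eq_dotProduct_blockVec (fun k => 0 = 0 ∧ k = p - 1) (fun _ l => τ⁻¹ * a p i l) v
        (c := p - 1) (by omega) fun k _ => by simp,
      zero_add, mulVec_smul]
    simp [dotProduct, Finset.mul_sum, mul_assoc, mulVec]
  · rw [floquetExtension_succ τ v (by omega),
      sum_ite_mul_eq_dotProduct_blockVec (fun l => k + 1 = l + 1) (fun l => a (l + 1) i) v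
        (c := k) (by omega) fun _ _ => by omega,
      sum_ite_mul_eq_zero (fun l => k + 1 = 0 ∧ l = p - 1) (fun _ l => τ⁻¹ * a p i l) v
        fun _ _ h => by omega, add_zero]
    rfl

theorem Kmat_mulVec_apply (ha₀ : a 0 = a p) (j : Fin p) :
    (Kmat p m a b τ *ᵥ v) (j, i) =
      (a (j + 1) *ᵥ floquetExtension τ v (j + 2) + b (j + 1) *ᵥ floquetExtension τ v (j + 1)
        + a j *ᵥ floquetExtension τ v j) i := by
  have hdiag : ∑ x : Fin p × Fin m, (if (j : ℕ) = x.1 then b (j + 1) i x.2 else 0) * v x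
      = (b (j + 1) *ᵥ floquetExtension τ v (j + 1)) i := by
    rw [floquetExtension_succ τ v j.2]
    exact sum_ite_mul_eq_dotProduct_blockVec (fun k => (j : ℕ) = k) (fun _ => b (j + 1) i) v j.2
      fun _ _ => eq_comm
  conv_lhs => simp only [mulVec, dotProduct, Kmat, of_apply, add_mul, Finset.sum_add_distrib]
  rw [Pi.add_apply, Pi.add_apply]
  linear_combination hdiag + sum_Kmat_upper τ v a i j + sum_Kmat_lower τ v a i ha₀ j

end FloquetExtension

section FloquetData

variable {p m : ℕ} (a b : ℕ → Matrix (Fin m) (Fin m) ℂ) (τ z : ℂ) {v : Fin p × Fin m → ℂ}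

theorem floquetExtension_solves (ha₀ : a 0 = a p) (hv : Kmat p m a b τ *ᵥ v = z • v) :
    ∀ n < p, a (n + 1) *ᵥ floquetExtension τ v (n + 2) + b (n + 1) *ᵥ floquetExtension τ v (n + 1)
      + a n *ᵥ floquetExtension τ v n = z • floquetExtension τ v (n + 1) := by
  intro n hn
  ext i
  rw [← Kmat_mulVec_apply τ v a b i ha₀ ⟨n, hn⟩, hv, floquetExtension_succ τ v hn]
  simp [blockVec, hn]

theorem Mmat_mulVec_floquetData (hp : 0 < p) (ha : ∀ n, IsUnit (a n)) (ha₀ : a 0 = a p)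
    (hτ : τ ≠ 0) (hv : Kmat p m a b τ *ᵥ v = z • v) :
    Mmat p a b z *ᵥ floquetData τ v = τ • floquetData τ v := by
  have hY₀ : floquetExtension τ v p = τ • floquetExtension τ v 0 := by
    have h := floquetExtension_succ τ v (Nat.sub_lt hp one_pos)
    rw [Nat.sub_add_cancel (Nat.one_le_of_lt hp)] at h
    rw [h, floquetExtension_zero, smul_inv_smul₀ hτ]
  have hY₁ : floquetExtension τ v (p + 1) = τ • floquetExtension τ v 1 := by
    rw [floquetExtension_add_one, floquetExtension_succ τ v hp]
  change Mmat p a b z *ᵥ Sum.elim _ _ = τ • Sum.elim _ _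
  rw [Mmat_mulVec_sumElim a b z ha p _ (floquetExtension_solves a b τ z ha₀ hv), hY₀, hY₁]
  ext (i | i) <;> rfl

theorem eq_zero_of_floquetData_eq_zero (ha : ∀ n, IsUnit (a n)) (ha₀ : a 0 = a p)
    (hv : Kmat p m a b τ *ᵥ v = z • v) (h : floquetData τ v = 0) : v = 0 := by
  have hY := eq_theta_mulVec_add_phi_mulVec a b z ha _ (floquetExtension_solves a b τ z ha₀ hv)
  have h₀ : floquetExtension τ v 0 = 0 := funext fun i => congrFun h (Sum.inl i)
  have h₁ : floquetExtension τ v 1 = 0 := funext fun i => congrFun h (Sum.inr i)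
  ext ⟨k, i⟩
  have := congrFun (hY (k + 1) (by omega)) i
  rw [floquetExtension_succ τ v k.2, h₀, h₁] at this
  simpa [blockVec] using this

end FloquetData

theorem stmt9_general (m p : ℕ) (hp : 2 ≤ p)
    (a b : ℕ → Matrix (Fin m) (Fin m) ℂ)
    (hper : ∀ n, a (n + p) = a n ∧ b (n + p) = b n)
    (ha : ∀ n, (a n).PosDef)
    (τ : ℂ) (hτ : τ = 1 ∨ τ = -1)
    (hH : (Kmat p m a b τ).IsHermitian)
    (lam : ℝ)
    (hmult : Multiset.count lam (Finset.univ.val.map hH.eigenvalues) = 2 * m) :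
    (Mmat p a b (lam : ℂ)).charpoly = (X - C τ) ^ (2 * m) := by
  have ha₀ : a 0 = a p := by simpa using (hper 0).1.symm
  have haU : ∀ n, IsUnit (a n) := fun n => (ha n).isUnit
  have hτ₀ : τ ≠ 0 := by rcases hτ with rfl | rfl <;> norm_num
  set E := Module.End.eigenspace (toLin' (Kmat p m a b τ)) (lam : ℂ)
  have hE : ∀ v ∈ E, Kmat p m a b τ *ᵥ v = (lam : ℂ) • v := fun v hv =>
    Module.End.mem_eigenspace_iff.mp hv
  have hmap : E.map (floquetData τ) = ⊤ := by
    refine E.map_eq_top_of_card_le_finrank _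
      (fun v hv => eq_zero_of_floquetData_eq_zero a b τ _ haU ha₀ (hE v hv)) ?_
    simpa [hmult, two_mul] using hH.count_eigenvalues_le_finrank_eigenspace lam
  have hM : Mmat p a b lam = τ • 1 := by
    refine eq_smul_one_of_mulVec_eq_smul _ _ fun w => ?_
    obtain ⟨v, hv, rfl⟩ := Submodule.mem_map.mp (hmap ▸ Submodule.mem_top : w ∈ E.map _)
    exact Mmat_mulVec_floquetData a b τ _ (by omega) haU ha₀ hτ₀ (hE v hv)
  rw [hM, charpoly_smul_one, Fintype.card_sum, Fintype.card_fin, two_mul]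

/-- Let `τ ∈ {1, −1}` and let `lam ∈ ℝ` be an eigenvalue of the Hermitian
matrix `K_p(τ)` of multiplicity `2m` (multiplicity counted in the multiset of eigenvalues
of `K_p(τ)`).  Then the characteristic polynomial of the monodromy matrix `M_p(lam)` equals
`(X − τ)^{2m}`; that is, every eigenvalue of `M_p(lam)` equals `τ`. -/
theorem stmt9 (m p : ℕ) (hm : 1 ≤ m) (hp : 2 ≤ p)
    (a b : ℕ → Matrix (Fin m) (Fin m) ℂ)
    (hper : ∀ n, a (n + p) = a n ∧ b (n + p) = b n)
    (ha : ∀ n, (a n).PosDef) (hb : ∀ n, (b n).IsHermitian)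
    (τ : ℂ) (hτ : τ = 1 ∨ τ = -1)
    (hH : (Kmat p m a b τ).IsHermitian)
    (lam : ℝ)
    (hmult : Multiset.count lam (Finset.univ.val.map hH.eigenvalues) = 2 * m) :
    (Mmat p a b (lam : ℂ)).charpoly = (X - C τ) ^ (2 * m) :=
  stmt9_general m p hp a b hper ha τ hτ hH lam hmult
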